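/- arXiv:2112.13409 — 3 statements merged into one kernel-verified Lean document; each statement's English description precedes it below -/
import Mathlib

section
/- Let s ∈ {0,1}, ℓ a nonnegative integer, λ₁, λ₂ ≥ 0 real, and f ∈ 𝓕(0,s,ℓ;λ₁,λ₂) with witness function g_ℓ. Let k ≥ 2 be an integer. Then, as x → ∞, ∑_{n₁,…,n_k ≤ x} f(gcd(n₁,…,n_k)) = F·x^k + O(x^{k−1} (log x)^{ℓ+1}), where F = ∑_{p prime} ( λ₁/p^k + λ₂ ∑_{α=2}^∞ g_ℓ(α)/p^{αk−s} ). -/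
/-!
An additive `f` is the sum of its prime-power increments: `f n = ∑_{p ^ β ∣ n, β ≥ 1}
(f (p ^ β) - f (p ^ (β - 1)))`. Since exactly `⌊x / d⌋ ^ k` tuples in `[1, x] ^ k` have their
gcd divisible by `d`, the gcd sum equals `∑_{p, β} (f (p ^ β) - f (p ^ (β - 1))) ⌊x / p ^ β⌋ ^ k`.
For `s ≤ 1` and `p ≥ 2` one has `|f (p ^ (β + 1)) - f (p ^ β)| ≤ w β * p ^ β` with the summable
weight `w β = 2 (λ₁ + λ₂ C₀) (β + 1) ^ ℓ / 2 ^ β`, so replacing `⌊y⌋ ^ k` by `y ^ k` (an error of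
at most `k y ^ (k - 1)`) costs `O(x ^ (k - 1) / p)` for each prime `p ≤ x`, and
`∑_{p ≤ x} 1 / p ≤ 1 + log x`. The primes `p > x` contribute nothing to the gcd sum, and their
Euler factors in `F` are `O(p ^ (-2))`, which leaves `O(x ^ k / x)`. Altogether the error is
even `O(x ^ (k - 1) log x)`.
-/

open Filter Finset MeasureTheory

/-- The `k`-fold sum of `f (gcd (n₁, …, n_k))` over positive integers `nᵢ ≤ x`. -/
noncomputable def gcdSum (f : ℕ → ℝ) (k : ℕ) (x : ℝ) : ℝ :=
  ∑ n ∈ Fintype.piFinset (fun _ : Fin k => Finset.Icc 1 ⌊x⌋₊), f (Finset.univ.gcd n)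

def IsAdditiveFunction (f : ℕ → ℝ) : Prop :=
  ∀ m n : ℕ, 1 ≤ m → 1 ≤ n → Nat.Coprime m n → f (m * n) = f m + f n

noncomputable def primePowDiff (f : ℕ → ℝ) (p β : ℕ) : ℝ := f (p ^ β) - f (p ^ (β - 1))

noncomputable def localFactor (f : ℕ → ℝ) (k p : ℕ) : ℝ :=
  ∑' β, primePowDiff f p (β + 1) / (p : ℝ) ^ ((β + 1) * k)

namespace IsAdditiveFunction

variable {f : ℕ → ℝ}

theorem map_one (hf : IsAdditiveFunction f) : f 1 = 0 := by
  have h := hf 1 1 le_rfl le_rfl (Nat.coprime_one_left 1)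
  rw [mul_one] at h
  linarith

theorem eq_sum_factorization (hf : IsAdditiveFunction f) {n : ℕ} (hn : n ≠ 0) :
    f n = n.factorization.sum fun p e => f (p ^ e) := by
  have h1 := hf.map_one
  have hmul : ∀ a b : ℕ, a.Coprime b →
      Multiplicative.ofAdd (f (a * b)) =
        Multiplicative.ofAdd (f a) * Multiplicative.ofAdd (f b) := by
    intro a b hab
    rcases Nat.eq_zero_or_pos a with rfl | ha
    · obtain rfl : b = 1 := by simpa using hab
      simp [h1]
    rcases Nat.eq_zero_or_pos b with rfl | hb
    · obtain rfl : a = 1 := by simpa using hab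
      simp [h1]
    rw [hf a b ha hb hab, ofAdd_add]
  have := Nat.multiplicative_factorization (fun n => Multiplicative.ofAdd (f n)) hmul
    (by simp [h1]) hn
  simpa [Finsupp.prod, Finsupp.sum, toAdd_prod] using congrArg Multiplicative.toAdd this

end IsAdditiveFunction

theorem sum_range_primePowDiff {f : ℕ → ℝ} (h1 : f 1 = 0) (p v : ℕ) :
    ∑ β ∈ range v, primePowDiff f p (β + 1) = f (p ^ v) := by
  simp only [primePowDiff, Nat.add_sub_cancel]
  rw [sum_range_sub (fun β => f (p ^ β)), pow_zero, h1, sub_zero]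

theorem sum_range_ite_pow_dvd {f : ℕ → ℝ} (h1 : f 1 = 0) {p n N : ℕ} (hp : p.Prime)
    (hn : n ≠ 0) (hnN : n ≤ N) :
    ∑ β ∈ range N, (if p ^ (β + 1) ∣ n then primePowDiff f p (β + 1) else 0) =
      f (p ^ n.factorization p) := by
  rw [← sum_filter, ← sum_range_primePowDiff h1]
  congr 1
  ext β
  have := Nat.factorization_lt p hn
  simp only [mem_filter, mem_range, hp.pow_dvd_iff_le_factorization hn]
  omega

theorem IsAdditiveFunction.eq_sum_primes_sum_pow_dvd {f : ℕ → ℝ} (hf : IsAdditiveFunction f)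
    {n N : ℕ} (hn : n ≠ 0) (hnN : n ≤ N) :
    f n = ∑ p ∈ (range (N + 1)).filter Nat.Prime, ∑ β ∈ range N,
      (if p ^ (β + 1) ∣ n then primePowDiff f p (β + 1) else 0) := by
  rw [sum_congr rfl fun p hp => sum_range_ite_pow_dvd hf.map_one (mem_filter.1 hp).2 hn hnN,
    hf.eq_sum_factorization hn, Finsupp.sum, Nat.support_factorization]
  refine sum_subset (fun p hp => ?_) (fun p hpN hp => ?_)
  · have := Nat.le_of_mem_primeFactors hp
    exact mem_filter.2 ⟨mem_range.2 (by omega), Nat.prime_of_mem_primeFactors hp⟩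
  · have hnd : ¬p ∣ n := fun h => hp (Nat.mem_primeFactors.2 ⟨(mem_filter.1 hpN).2, h, hn⟩)
    rw [Nat.factorization_eq_zero_of_not_dvd hnd, pow_zero, hf.map_one]

theorem card_filter_dvd_gcd_piFinset (N k d : ℕ) :
    #{n ∈ Fintype.piFinset (fun _ : Fin k => Icc 1 N) | d ∣ univ.gcd n} = (N / d) ^ k := by
  have : {n ∈ Fintype.piFinset (fun _ : Fin k => Icc 1 N) | d ∣ univ.gcd n} =
      Fintype.piFinset fun _ => {m ∈ Icc 1 N | d ∣ m} := by
    ext n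
    simp only [mem_filter, Fintype.mem_piFinset, Finset.dvd_gcd_iff, mem_univ, true_implies,
      forall_and]
  rw [this, Fintype.card_piFinset, prod_const, card_univ, Fintype.card_fin]
  exact congrArg (· ^ k) (Nat.Ioc_filter_dvd_card_eq_div N d)

theorem IsAdditiveFunction.gcdSum_eq {f : ℕ → ℝ} (hf : IsAdditiveFunction f) {k : ℕ}
    (hk : k ≠ 0) (x : ℝ) :
    gcdSum f k x = ∑ p ∈ (range (⌊x⌋₊ + 1)).filter Nat.Prime, ∑ β ∈ range ⌊x⌋₊,
      primePowDiff f p (β + 1) * ((⌊x⌋₊ / p ^ (β + 1) : ℕ) : ℝ) ^ k := by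
  unfold gcdSum
  set N := ⌊x⌋₊
  have hgcd : ∀ n ∈ Fintype.piFinset (fun _ : Fin k => Icc 1 N),
      univ.gcd n ≠ 0 ∧ univ.gcd n ≤ N := by
    intro n hn
    let i : Fin k := ⟨0, Nat.pos_of_ne_zero hk⟩
    have hi := mem_Icc.1 (Fintype.mem_piFinset.1 hn i)
    have hdvd : univ.gcd n ∣ n i := gcd_dvd (mem_univ i)
    exact ⟨(Nat.pos_of_dvd_of_pos hdvd (by omega)).ne', (Nat.le_of_dvd (by omega) hdvd).trans hi.2⟩
  rw [sum_congr rfl fun n hn => hf.eq_sum_primes_sum_pow_dvd (hgcd n hn).1 (hgcd n hn).2,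
    sum_comm]
  refine sum_congr rfl fun p _ => ?_
  rw [sum_comm]
  refine sum_congr rfl fun β _ => ?_
  rw [← sum_filter, sum_const, card_filter_dvd_gcd_piFinset, nsmul_eq_mul, mul_comm, Nat.cast_pow]

theorem abs_pow_sub_natFloor_pow_le {y : ℝ} (hy : 0 ≤ y) (k : ℕ) :
    |y ^ k - (⌊y⌋₊ : ℝ) ^ k| ≤ k * y ^ (k - 1) := by
  have hfl : 0 ≤ y - ⌊y⌋₊ := sub_nonneg.2 (Nat.floor_le hy)
  calc |y ^ k - (⌊y⌋₊ : ℝ) ^ k| ≤ |y - ⌊y⌋₊| * k * max |y| |(⌊y⌋₊ : ℝ)| ^ (k - 1) :=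
        abs_pow_sub_pow_le ..
    _ ≤ 1 * k * y ^ (k - 1) := by
        rw [abs_of_nonneg hfl, abs_of_nonneg hy, Nat.abs_cast, max_eq_left (Nat.floor_le hy)]
        gcongr
        linarith [Nat.lt_floor_add_one y]
    _ = k * y ^ (k - 1) := by rw [one_mul]

theorem nonneg_of_abs_le_mul_pow {a w q : ℝ} (hq : 0 < q) {β : ℕ} (ha : |a| ≤ w * q ^ β) :
    0 ≤ w :=
  nonneg_of_mul_nonneg_left ((abs_nonneg a).trans ha) (pow_pos hq β)

theorem abs_div_pow_mul_le {a w q : ℝ} (hq : 1 ≤ q) {β j : ℕ} (hj : 1 ≤ j)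
    (ha : |a| ≤ w * q ^ β) : |a| / q ^ ((β + 1) * j) ≤ w / q ^ j := by
  have hw := nonneg_of_abs_le_mul_pow (by linarith) ha
  have hpow : q ^ β * q ^ j ≤ q ^ ((β + 1) * j) := by
    rw [← pow_add]
    exact pow_le_pow_right₀ hq (by nlinarith)
  rw [div_le_div_iff₀ (by positivity) (by positivity)]
  calc |a| * q ^ j ≤ w * q ^ β * q ^ j := by gcongr
    _ ≤ w * q ^ ((β + 1) * j) := by rw [mul_assoc]; gcongr

section

variable {a w : ℕ → ℝ} {q : ℕ}

theorem summable_div_pow_mul (hq : 1 ≤ q) (hw : Summable w)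
    (ha : ∀ β, |a β| ≤ w β * (q : ℝ) ^ β) {j : ℕ} (hj : 1 ≤ j) :
    Summable fun β => a β / (q : ℝ) ^ ((β + 1) * j) := by
  have hq' : (1 : ℝ) ≤ q := by exact_mod_cast hq
  refine Summable.of_norm_bounded (hw.div_const ((q : ℝ) ^ j)) fun β => ?_
  rw [Real.norm_eq_abs, abs_div, abs_of_nonneg (by positivity : (0 : ℝ) ≤ (q : ℝ) ^ _)]
  exact abs_div_pow_mul_le hq' hj (ha β)

theorem abs_tsum_div_pow_mul_le (hq : 1 ≤ q) (hw : Summable w)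
    (ha : ∀ β, |a β| ≤ w β * (q : ℝ) ^ β) {j : ℕ} (hj : 1 ≤ j) :
    |∑' β, a β / (q : ℝ) ^ ((β + 1) * j)| ≤ (∑' β, w β) / (q : ℝ) ^ j := by
  have hq' : (1 : ℝ) ≤ q := by exact_mod_cast hq
  rw [← tsum_div_const, ← Real.norm_eq_abs]
  refine tsum_of_norm_bounded (hw.div_const _).hasSum fun β => ?_
  rw [Real.norm_eq_abs, abs_div, abs_of_nonneg (by positivity : (0 : ℝ) ≤ (q : ℝ) ^ _)]
  exact abs_div_pow_mul_le hq' hj (ha β)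

theorem abs_sum_mul_floor_pow_sub_le (hq : 2 ≤ q) (hw : Summable w)
    (ha : ∀ β, |a β| ≤ w β * (q : ℝ) ^ β) {k : ℕ} (hk : 2 ≤ k) {x : ℝ} (hx : 0 ≤ x) :
    |∑ β ∈ range ⌊x⌋₊, a β * ((⌊x⌋₊ / q ^ (β + 1) : ℕ) : ℝ) ^ k -
        x ^ k * ∑' β, a β / (q : ℝ) ^ ((β + 1) * k)|
      ≤ k * x ^ (k - 1) / q * ∑' β, w β := by
  have hq1 : (1 : ℝ) ≤ q := by exact_mod_cast (by omega : 1 ≤ q)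
  have hfloor : ∀ β, (⌊x⌋₊ / q ^ (β + 1) : ℕ) = ⌊x / (q : ℝ) ^ (β + 1)⌋₊ := fun β => by
    rw [← Nat.cast_pow, Nat.floor_div_natCast]
  have hvanish : ∀ β ∉ range ⌊x⌋₊, a β * ((⌊x⌋₊ / q ^ (β + 1) : ℕ) : ℝ) ^ k = 0 := by
    intro β hβ
    have : ⌊x⌋₊ < q ^ (β + 1) :=
      calc ⌊x⌋₊ < β + 1 := by simpa using hβ
        _ < 2 ^ (β + 1) := Nat.lt_two_pow_self
        _ ≤ q ^ (β + 1) := Nat.pow_le_pow_left hq _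
    rw [Nat.div_eq_of_lt this, Nat.cast_zero, zero_pow (by omega), mul_zero]
  rw [← tsum_eq_sum (L := .unconditional ℕ) hvanish, ← tsum_mul_left,
    ← (summable_of_ne_finset_zero hvanish).tsum_sub
      ((summable_div_pow_mul (by omega) hw ha (by omega : 1 ≤ k)).mul_left _),
    ← tsum_mul_left, ← Real.norm_eq_abs]
  refine tsum_of_norm_bounded (hw.mul_left _).hasSum fun β => ?_
  set y := x / (q : ℝ) ^ (β + 1)
  have hy : 0 ≤ y := by positivity
  have hyk : x ^ k * (a β / (q : ℝ) ^ ((β + 1) * k)) = a β * y ^ k := by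
    rw [div_pow, pow_mul']
    ring
  have hyk1 : y ^ (k - 1) = x ^ (k - 1) / (q : ℝ) ^ ((β + 1) * (k - 1)) := by
    rw [div_pow, ← pow_mul]
  have hw0 := nonneg_of_abs_le_mul_pow (by positivity) (ha β)
  rw [Real.norm_eq_abs, hyk, hfloor, ← mul_sub, abs_mul, abs_sub_comm]
  calc |a β| * |y ^ k - (⌊y⌋₊ : ℝ) ^ k| ≤ |a β| * (k * y ^ (k - 1)) := by
        gcongr
        exact abs_pow_sub_natFloor_pow_le hy k
    _ = k * x ^ (k - 1) * (|a β| / (q : ℝ) ^ ((β + 1) * (k - 1))) := by rw [hyk1]; ring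
    _ ≤ k * x ^ (k - 1) * (w β / (q : ℝ) ^ (k - 1)) :=
        mul_le_mul_of_nonneg_left (abs_div_pow_mul_le hq1 (by omega) (ha β)) (by positivity)
    _ ≤ k * x ^ (k - 1) * (w β / q) := by
        gcongr
        exact le_self_pow₀ hq1 (by omega)
    _ = k * x ^ (k - 1) / q * w β := by ring

end

theorem tsum_inv_sq_nat_add_le (N : ℕ) :
    ∑' i : ℕ, (((i + (N + 1) : ℕ) : ℝ) ^ 2)⁻¹ ≤ 2 / (N + 1) := by
  refine Real.tsum_le_of_sum_range_le (fun _ => by positivity) fun n => ?_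
  calc ∑ i ∈ range n, (((i + (N + 1) : ℕ) : ℝ) ^ 2)⁻¹
      = ∑ i ∈ Ioo N (N + 1 + n), ((i : ℝ) ^ 2)⁻¹ := by
        rw [← Finset.Ico_add_one_left_eq_Ioo, sum_Ico_eq_sum_range, Nat.add_sub_cancel_left]
        simp_rw [add_comm]
    _ ≤ 2 / (N + 1) := sum_Ioo_inv_sq_le N _

theorem sum_primes_inv_le_one_add_log (N : ℕ) :
    ∑ p ∈ (range (N + 1)).filter Nat.Prime, (p : ℝ)⁻¹ ≤ 1 + Real.log N := by
  calc ∑ p ∈ (range (N + 1)).filter Nat.Prime, (p : ℝ)⁻¹ ≤ ∑ m ∈ Icc 1 N, (m : ℝ)⁻¹ := by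
        refine sum_le_sum_of_subset_of_nonneg (fun p hp => ?_) fun _ _ _ => by positivity
        obtain ⟨hpN, hp⟩ := mem_filter.1 hp
        exact mem_Icc.2 ⟨hp.one_lt.le, Nat.lt_succ_iff.1 (mem_range.1 hpN)⟩
    _ = harmonic N := by
        rw [harmonic_eq_sum_Icc, Rat.cast_sum]
        simp_rw [Rat.cast_inv, Rat.cast_natCast]
    _ ≤ 1 + Real.log N := harmonic_le_one_add_log N

theorem abs_tsum_primes_sub_sum_le {c : ℕ → ℝ} {W : ℝ}
    (hc : ∀ p, p.Prime → |c p| ≤ W * ((p : ℝ) ^ 2)⁻¹) (N : ℕ) :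
    |∑' p : Nat.Primes, c p - ∑ p ∈ (range (N + 1)).filter Nat.Prime, c p| ≤ W * (2 / (N + 1)) := by
  have hW : 0 ≤ W := nonneg_of_mul_nonneg_left ((abs_nonneg _).trans (hc 2 Nat.prime_two))
    (by norm_num)
  set c' : ℕ → ℝ := {p | p.Prime}.indicator c
  have hc' : ∀ n, ‖c' n‖ ≤ W * ((n : ℝ) ^ 2)⁻¹ := by
    intro n
    by_cases hn : n.Prime
    · rw [show c' n = c n from Set.indicator_of_mem (s := {p : ℕ | p.Prime}) hn _,
        Real.norm_eq_abs]
      exact hc n hn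
    · rw [show c' n = 0 from Set.indicator_of_notMem (s := {p : ℕ | p.Prime}) hn _, norm_zero]
      positivity
  have hsq : Summable fun n : ℕ => ((n : ℝ) ^ 2)⁻¹ := Real.summable_nat_pow_inv.2 one_lt_two
  have hsplit : ∑' p : Nat.Primes, c p =
      ∑ p ∈ (range (N + 1)).filter Nat.Prime, c p + ∑' i, c' (i + (N + 1)) := by
    rw [show ∑' p : Nat.Primes, c p = ∑' n, c' n from _root_.tsum_subtype {p : ℕ | p.Prime} c,
      ← (Summable.of_norm_bounded (hsq.mul_left W) hc').sum_add_tsum_nat_add (N + 1), sum_filter]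
    congr 1
    simp only [c', Set.indicator_apply, Set.mem_ofPred_eq]
  rw [hsplit, add_sub_cancel_left, ← Real.norm_eq_abs]
  refine (tsum_of_norm_bounded
    (((summable_nat_add_iff (N + 1)).2 hsq).mul_left W).hasSum fun i => ?_).trans ?_
  · exact_mod_cast hc' (i + (N + 1))
  · rw [tsum_mul_left]
    exact mul_le_mul_of_nonneg_left (by exact_mod_cast tsum_inv_sq_nat_add_le N) hW

theorem IsAdditiveFunction.abs_gcdSum_sub_le {f w : ℕ → ℝ} (hf : IsAdditiveFunction f)
    (hw : Summable w) (hD : ∀ p, p.Prime → ∀ β, |primePowDiff f p (β + 1)| ≤ w β * (p : ℝ) ^ β)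
    {k : ℕ} (hk : 2 ≤ k) {x : ℝ} (hx : 1 ≤ x) :
    |gcdSum f k x - (∑' p : Nat.Primes, localFactor f k p) * x ^ k|
      ≤ (∑' β, w β) * x ^ (k - 1) * (k * (1 + Real.log x) + 2) := by
  rw [hf.gcdSum_eq (by omega)]
  set W := ∑' β, w β
  set N := ⌊x⌋₊
  set P := (range (N + 1)).filter Nat.Prime
  set F := ∑' p : Nat.Primes, localFactor f k p
  have hW : 0 ≤ W := tsum_nonneg fun β => nonneg_of_abs_le_mul_pow two_pos (hD 2 Nat.prime_two β)
  have hN : (1 : ℝ) ≤ N := by exact_mod_cast Nat.le_floor (by simpa using hx)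
  have hxN : x < N + 1 := Nat.lt_floor_add_one x
  have hlocal : ∀ p ∈ P, |∑ β ∈ range N, primePowDiff f p (β + 1) * ((N / p ^ (β + 1) : ℕ) : ℝ) ^ k
      - x ^ k * localFactor f k p| ≤ k * x ^ (k - 1) / p * W := fun p hp =>
    abs_sum_mul_floor_pow_sub_le (mem_filter.1 hp).2.two_le hw (hD p (mem_filter.1 hp).2) hk
      (by linarith)
  have htail : |F - ∑ p ∈ P, localFactor f k p| ≤ W * (2 / (N + 1)) := by
    refine abs_tsum_primes_sub_sum_le (fun p hp => ?_) N
    have hp1 : (1 : ℝ) ≤ p := by exact_mod_cast hp.one_lt.le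
    calc |localFactor f k p| ≤ W / (p : ℝ) ^ k :=
          abs_tsum_div_pow_mul_le hp.one_lt.le hw (hD p hp) (by omega)
      _ ≤ W * ((p : ℝ) ^ 2)⁻¹ := by
          rw [← div_eq_mul_inv]
          exact div_le_div_of_nonneg_left hW (by positivity) (pow_le_pow_right₀ hp1 hk)
  have hP : ∑ p ∈ P, (p : ℝ)⁻¹ ≤ 1 + Real.log x :=
    (sum_primes_inv_le_one_add_log N).trans (by gcongr; exact Nat.floor_le (by linarith))
  have hxk : x ^ k = x ^ (k - 1) * x := by rw [← pow_succ, Nat.sub_add_cancel (by omega)]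
  calc _ = |∑ p ∈ P, (∑ β ∈ range N, primePowDiff f p (β + 1) * ((N / p ^ (β + 1) : ℕ) : ℝ) ^ k
          - x ^ k * localFactor f k p) - x ^ k * (F - ∑ p ∈ P, localFactor f k p)| := by
        rw [sum_sub_distrib, ← mul_sum]
        ring_nf
    _ ≤ ∑ p ∈ P, k * x ^ (k - 1) / p * W + x ^ k * (W * (2 / (N + 1))) := by
        refine (abs_sub _ _).trans ?_
        rw [abs_mul, abs_of_nonneg (by positivity : (0 : ℝ) ≤ x ^ k)]
        gcongr
        exact (abs_sum_le_sum_abs _ _).trans (sum_le_sum hlocal)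
    _ = (∑ p ∈ P, (p : ℝ)⁻¹) * (k * x ^ (k - 1) * W) + x ^ (k - 1) * W * (2 * (x / (N + 1))) := by
        rw [sum_mul, hxk]
        congr 1
        · exact sum_congr rfl fun p _ => by ring
        · ring
    _ ≤ (1 + Real.log x) * (k * x ^ (k - 1) * W) + x ^ (k - 1) * W * (2 * 1) := by
        gcongr
        exact (div_le_one (by linarith)).2 hxN.le
    _ = W * x ^ (k - 1) * (k * (1 + Real.log x) + 2) := by ring

theorem IsAdditiveFunction.gcdSum_sub_isBigO {f w : ℕ → ℝ} (hf : IsAdditiveFunction f)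
    (hw : Summable w) (hD : ∀ p, p.Prime → ∀ β, |primePowDiff f p (β + 1)| ≤ w β * (p : ℝ) ^ β)
    {k : ℕ} (hk : 2 ≤ k) :
    (fun x => gcdSum f k x - (∑' p : Nat.Primes, localFactor f k p) * x ^ k)
      =O[atTop] fun x => x ^ (k - 1) * Real.log x := by
  have hW : 0 ≤ ∑' β, w β :=
    tsum_nonneg fun β => nonneg_of_abs_le_mul_pow two_pos (hD 2 Nat.prime_two β)
  refine Asymptotics.IsBigO.of_bound ((∑' β, w β) * (2 * k + 2)) ?_
  filter_upwards [eventually_ge_atTop (Real.exp 1)] with x hx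
  have hx1 : 1 ≤ x := (Real.one_lt_exp_iff.2 one_pos).le.trans hx
  have hlog : 1 ≤ Real.log x := (Real.le_log_iff_exp_le (by linarith)).2 hx
  rw [Real.norm_eq_abs, Real.norm_of_nonneg (mul_nonneg (by positivity) (by linarith))]
  calc _ ≤ (∑' β, w β) * x ^ (k - 1) * (k * (1 + Real.log x) + 2) :=
        hf.abs_gcdSum_sub_le hw hD hk hx1
    _ ≤ (∑' β, w β) * x ^ (k - 1) * ((2 * k + 2) * Real.log x) := by
        gcongr
        nlinarith
    _ = (∑' β, w β) * (2 * k + 2) * (x ^ (k - 1) * Real.log x) := by ring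

theorem summable_natCast_add_one_pow_div_two_pow (ℓ : ℕ) :
    Summable fun β : ℕ => ((β : ℝ) + 1) ^ ℓ / 2 ^ β := by
  have h := (summable_nat_add_iff 1).2
    (summable_pow_mul_geometric_of_norm_lt_one ℓ (r := (2 : ℝ)⁻¹) (by norm_num))
  refine (h.mul_left 2).congr fun β => ?_
  push_cast
  rw [pow_succ, inv_pow]
  field_simp

section ClassF

variable {f g : ℕ → ℝ} {s ℓ k p : ℕ} {lam1 lam2 C0 : ℝ}

theorem abs_primePowDiff_le (hs : s ≤ 1) (hlam1 : 0 ≤ lam1) (hlam2 : 0 ≤ lam2) (hC0 : 0 ≤ C0)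
    (h1 : f 1 = 0) (hp : 2 ≤ p) (hfp : f p = lam1)
    (hfpa : ∀ α : ℕ, 2 ≤ α → f (p ^ α) - f (p ^ (α - 1)) = lam2 * (p : ℝ) ^ s * g α)
    (hg : ∀ α : ℕ, 2 ≤ α → |g α| ≤ C0 * (α : ℝ) ^ ℓ) (β : ℕ) :
    |primePowDiff f p (β + 1)| ≤ 2 * (lam1 + lam2 * C0) * (((β : ℝ) + 1) ^ ℓ / 2 ^ β) * p ^ β := by
  have hlC : 0 ≤ lam2 * C0 := mul_nonneg hlam2 hC0
  cases β with
  | zero =>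
    simp only [primePowDiff, zero_add, pow_one, Nat.sub_self, pow_zero, h1, hfp, sub_zero,
      abs_of_nonneg hlam1, Nat.cast_zero, one_pow, div_one, mul_one]
    linarith
  | succ β =>
    have hp1 : (1 : ℝ) ≤ p := by exact_mod_cast (by omega : 1 ≤ p)
    have hps : (p : ℝ) ^ s ≤ p := by simpa using pow_le_pow_right₀ hp1 hs
    have hpow : (p : ℝ) * 2 ^ β ≤ p ^ (β + 1) := by
      rw [pow_succ']
      gcongr
      exact_mod_cast hp
    rw [primePowDiff, hfpa (β + 1 + 1) (by omega), abs_mul, abs_mul, abs_of_nonneg hlam2,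
      abs_of_nonneg (by positivity)]
    calc lam2 * (p : ℝ) ^ s * |g (β + 1 + 1)|
        ≤ lam2 * p * (C0 * ((β + 1 : ℕ) + 1 : ℝ) ^ ℓ) := by
          gcongr
          exact_mod_cast hg (β + 1 + 1) (by omega)
      _ = 2 * (lam2 * C0) * (((β + 1 : ℕ) + 1 : ℝ) ^ ℓ / 2 ^ (β + 1)) * (p * 2 ^ β) := by
          rw [pow_succ]
          field_simp
      _ ≤ 2 * (lam1 + lam2 * C0) * (((β + 1 : ℕ) + 1 : ℝ) ^ ℓ / 2 ^ (β + 1)) * p ^ (β + 1) := by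
          gcongr
          linarith

theorem localFactor_eq (h1 : f 1 = 0) (hfp : f p = lam1)
    (hfpa : ∀ α : ℕ, 2 ≤ α → f (p ^ α) - f (p ^ (α - 1)) = lam2 * (p : ℝ) ^ s * g α)
    (hsum : Summable fun β => primePowDiff f p (β + 1) / (p : ℝ) ^ ((β + 1) * k)) :
    localFactor f k p =
      lam1 / (p : ℝ) ^ k + lam2 * ∑' α : ℕ, (p : ℝ) ^ s * g (α + 2) / (p : ℝ) ^ ((α + 2) * k) := by
  rw [localFactor, hsum.tsum_eq_zero_add, ← tsum_mul_left]
  congr 1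
  · simp [primePowDiff, h1, hfp]
  · refine tsum_congr fun α => ?_
    rw [primePowDiff, hfpa (α + 1 + 1) (by omega)]
    ring

end ClassF

theorem stmt9 (s ℓ : ℕ) (hs : s = 0 ∨ s = 1) (lam1 lam2 : ℝ)
    (hlam1 : 0 ≤ lam1) (hlam2 : 0 ≤ lam2)
    (f g : ℕ → ℝ) (C0 : ℝ) (hC0 : 0 ≤ C0)
    (hadd : ∀ m n : ℕ, 1 ≤ m → 1 ≤ n → Nat.Coprime m n → f (m * n) = f m + f n)
    (hfp : ∀ p : ℕ, p.Prime → f p = lam1)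
    (hfpa : ∀ p : ℕ, p.Prime → ∀ α : ℕ, 2 ≤ α →
      f (p ^ α) - f (p ^ (α - 1)) = lam2 * (p : ℝ) ^ s * g α)
    (hg : ∀ α : ℕ, 2 ≤ α → |g α| ≤ C0 * (α : ℝ) ^ ℓ)
    (k : ℕ) (hk : 2 ≤ k) :
    (fun x : ℝ => gcdSum f k x -
      (∑' p : Nat.Primes, (lam1 / ((p : ℕ) : ℝ) ^ k +
        lam2 * ∑' α : ℕ, ((p : ℕ) : ℝ) ^ s * g (α + 2) / ((p : ℕ) : ℝ) ^ ((α + 2) * k))) * x ^ k)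
      =O[atTop] (fun x : ℝ => x ^ (k - 1) * Real.log x ^ (ℓ + 1)) := by
  have hf : IsAdditiveFunction f := hadd
  have hD : ∀ p, p.Prime → ∀ β, |primePowDiff f p (β + 1)|
      ≤ 2 * (lam1 + lam2 * C0) * (((β : ℝ) + 1) ^ ℓ / 2 ^ β) * (p : ℝ) ^ β := fun p hp =>
    abs_primePowDiff_le (by omega) hlam1 hlam2 hC0 hf.map_one hp.two_le (hfp p hp) (hfpa p hp) hg
  have hw := (summable_natCast_add_one_pow_div_two_pow ℓ).mul_left (2 * (lam1 + lam2 * C0))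
  have hF : ∑' p : Nat.Primes, localFactor f k p = ∑' p : Nat.Primes, (lam1 / ((p : ℕ) : ℝ) ^ k +
      lam2 * ∑' α : ℕ, ((p : ℕ) : ℝ) ^ s * g (α + 2) / ((p : ℕ) : ℝ) ^ ((α + 2) * k)) :=
    tsum_congr fun p => localFactor_eq hf.map_one (hfp p p.2) (hfpa p p.2)
      (summable_div_pow_mul p.2.one_lt.le hw (hD p p.2) (by omega))
  have hlog : (fun x => Real.log x) =O[atTop] fun x => Real.log x ^ (ℓ + 1) :=
    Asymptotics.IsBigO.of_bound 1 <| (Real.tendsto_log_atTop.eventually_ge_atTop 1).mono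
      fun x hx => by
        rw [one_mul, Real.norm_of_nonneg (by linarith), Real.norm_of_nonneg (by positivity)]
        exact le_self_pow₀ hx (by omega)
  rw [← hF]
  exact (hf.gcdSum_sub_isBigO hw hD hk).trans ((Asymptotics.isBigO_refl _ _).mul hlog)
end

section
/- Let r ≥ 0 and k ≥ 1 be integers with k ≥ r+2. Then, as x → ∞, ∑_{p prime, p ≤ x} p^r ⌊x/p⌋^k = x^k ∑_{p prime} p^{r−k} + O( x^{k−1} (log log x)^{κ} ), where κ = 1 if r = k−2 and κ = 0 otherwise (i.e., the error term is O(x^{k−1} log log x) when r = k−2 and O(x^{k−1}) when r ≤ k−3). -/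
/-!
Write `S(x) = ∑_{p ≤ x} p^r ⌊x/p⌋^k` and `T = ∑_p p^(r-k)`. Since `p^r (x/p)^k = x^k p^(r-k)`,
`S(x) - x^k T = -x^k ∑_{p > x} p^(r-k) - ∑_{p ≤ x} p^r ((x/p)^k - ⌊x/p⌋^k)`.
The tail is at most `x^k ∑_{n > x} n⁻² ≤ 2 x^(k-1)`. By the mean value bound
`y^k - ⌊y⌋^k ≤ k y^(k-1)`, the second sum is at most `k x^(k-1) ∑_{p ≤ x} p^(r+1-k)`, which is
`O(1)` when `k - r - 1 ≥ 2` and `O(log log x)` when `r + 2 = k`. For the latter, the primes in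
`(2^j, 2^(j+1)]` have product at most `primorial (2^(j+1)) ≤ 4^(2^(j+1))`, so there are at most
`2^(j+2)/j` of them, their reciprocals add up to at most `4/j`, and summing over `j ≤ log₂ x`
gives a harmonic number `O(log log x)`.
-/

open Filter Finset Asymptotics Real

lemma pow_sub_pow_le_mul_sub {R : Type*} [CommRing R] [LinearOrder R] [IsStrictOrderedRing R]
    {x y : R} (hy : 0 ≤ y) (hyx : y ≤ x) (n : ℕ) :
    x ^ n - y ^ n ≤ n * x ^ (n - 1) * (x - y) := by
  have hx : 0 ≤ x := hy.trans hyx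
  rw [← geom_sum₂_mul, ← geom_sum₂_self]
  gcongr

lemma pow_sub_natFloor_pow_le {K : Type*} [Field K] [LinearOrder K] [IsStrictOrderedRing K]
    [FloorSemiring K] {y : K} (hy : 0 ≤ y) (n : ℕ) :
    y ^ n - (⌊y⌋₊ : K) ^ n ≤ n * y ^ (n - 1) := calc
  y ^ n - (⌊y⌋₊ : K) ^ n ≤ n * y ^ (n - 1) * (y - ⌊y⌋₊) :=
    pow_sub_pow_le_mul_sub (Nat.cast_nonneg _) (Nat.floor_le hy) n
  _ ≤ n * y ^ (n - 1) := by
    have := Nat.lt_floor_add_one y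
    exact mul_le_of_le_one_right (by positivity) (by linarith)

lemma pow_div_pow_le_inv_pow {K : Type*} [Field K] [LinearOrder K] [IsStrictOrderedRing K]
    {a : K} (ha : 1 ≤ a) {r k m : ℕ} (h : r + m ≤ k) : a ^ r / a ^ k ≤ (a ^ m)⁻¹ := by
  have ha0 : 0 < a := zero_lt_one.trans_le ha
  rw [div_le_iff₀ (by positivity), inv_mul_eq_div, le_div_iff₀ (by positivity), ← pow_add]
  exact pow_le_pow_right₀ ha h

lemma mul_card_primes_Ioc_two_pow_le (j : ℕ) :
    j * #{p ∈ Ioc (2 ^ j) (2 ^ (j + 1)) | p.Prime} ≤ 2 ^ (j + 2) := by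
  set s := {p ∈ Ioc (2 ^ j) (2 ^ (j + 1)) | p.Prime}
  have hsub : s ⊆ Nat.primesLE (2 ^ (j + 1)) := fun p hp => by
    simp only [s, mem_filter, mem_Ioc] at hp
    exact Nat.mem_primesLE.2 ⟨hp.1.2, hp.2⟩
  refine (Nat.pow_le_pow_iff_right one_lt_two).1 ?_
  calc 2 ^ (j * #s) = (2 ^ j) ^ #s := pow_mul ..
    _ ≤ ∏ p ∈ s, p := pow_card_le_prod _ _ _ fun p hp => (mem_Ioc.1 (mem_filter.1 hp).1).1.le
    _ ≤ primorial (2 ^ (j + 1)) :=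
      prod_le_prod_of_subset_of_one_le' hsub fun p hp _ => (Nat.prime_of_mem_primesLE hp).one_le
    _ ≤ 4 ^ 2 ^ (j + 1) := primorial_le_four_pow _
    _ = 2 ^ 2 ^ (j + 2) := by rw [show 4 = 2 ^ 2 by rfl, ← pow_mul, pow_succ 2 (j + 1), mul_comm]

lemma sum_inv_primes_Ioc_two_pow_le {j : ℕ} (hj : 1 ≤ j) :
    ∑ p ∈ ({p ∈ Ioc (2 ^ j) (2 ^ (j + 1)) | p.Prime} : Finset ℕ), (p : ℝ)⁻¹ ≤ 4 / j := by
  set s := {p ∈ Ioc (2 ^ j) (2 ^ (j + 1)) | p.Prime}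
  have hcard : (j : ℝ) * #s ≤ 4 * 2 ^ j := by
    have := mul_card_primes_Ioc_two_pow_le j
    rw [pow_add] at this
    exact_mod_cast this.trans_eq (by ring)
  calc ∑ p ∈ s, (p : ℝ)⁻¹ ≤ #s • ((2 : ℝ) ^ j)⁻¹ := by
        refine sum_le_card_nsmul _ _ _ fun p hp => inv_anti₀ (by positivity) ?_
        exact_mod_cast (mem_Ioc.1 (mem_filter.1 hp).1).1.le
    _ ≤ 4 / j := by
        rw [nsmul_eq_mul, le_div_iff₀ (by positivity)]
        calc (#s : ℝ) * (2 ^ j)⁻¹ * j = j * #s / 2 ^ j := by ring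
          _ ≤ 4 := by rw [div_le_iff₀ (by positivity)]; exact hcard

lemma primesLE_two_pow_succ_eq_union (J : ℕ) :
    Nat.primesLE (2 ^ (J + 1)) =
      Nat.primesLE (2 ^ J) ∪ {p ∈ Ioc (2 ^ J) (2 ^ (J + 1)) | p.Prime} := by
  have : 2 ^ J ≤ 2 ^ (J + 1) := Nat.pow_le_pow_right two_pos J.le_succ
  ext p
  by_cases hp : p.Prime <;> simp [Nat.mem_primesLE, hp]
  omega

lemma sum_inv_primesLE_two_pow_le (J : ℕ) :
    ∑ p ∈ Nat.primesLE (2 ^ (J + 1)), (p : ℝ)⁻¹ ≤ 1 / 2 + 4 * harmonic J := by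
  induction J with
  | zero => simp [show Nat.primesLE 2 = {2} by decide]
  | succ J ih =>
    have hdisj : Disjoint (Nat.primesLE (2 ^ (J + 1)))
        {p ∈ Ioc (2 ^ (J + 1)) (2 ^ (J + 1 + 1)) | p.Prime} :=
      disjoint_left.2 fun p hp hp' => by
        have := Nat.le_of_mem_primesLE hp
        simp only [mem_filter, mem_Ioc] at hp'
        omega
    rw [primesLE_two_pow_succ_eq_union (J + 1), sum_union hdisj, harmonic_succ]
    have := sum_inv_primes_Ioc_two_pow_le (Nat.le_add_left 1 J)
    push_cast at this ⊢
    rw [div_eq_mul_inv] at this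
    linarith

lemma sum_inv_primesLE_le (N : ℕ) :
    ∑ p ∈ Nat.primesLE N, (p : ℝ)⁻¹ ≤ 9 / 2 + 4 * log (Nat.log 2 N) := by
  have hN : N ≤ 2 ^ (Nat.log 2 N + 1) := (Nat.lt_pow_succ_log_self one_lt_two N).le
  calc ∑ p ∈ Nat.primesLE N, (p : ℝ)⁻¹ ≤ ∑ p ∈ Nat.primesLE (2 ^ (Nat.log 2 N + 1)), (p : ℝ)⁻¹ :=
        sum_le_sum_of_subset_of_nonneg (Nat.primesLE_mono hN) fun _ _ _ => by positivity
    _ ≤ 1 / 2 + 4 * harmonic (Nat.log 2 N) := sum_inv_primesLE_two_pow_le _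
    _ ≤ 9 / 2 + 4 * log (Nat.log 2 N) := by
        have := harmonic_le_one_add_log (Nat.log 2 N)
        linarith

lemma one_le_log_log {x : ℝ} (hx : exp (exp 1) ≤ x) : 1 ≤ log (log x) := by
  have hexp : exp 1 ≤ log x := (le_log_iff_exp_le ((exp_pos _).trans_le hx)).2 hx
  exact (le_log_iff_exp_le (by linarith [add_one_le_exp 1])).2 hexp

lemma isBigO_sum_inv_primesLE_floor :
    (fun x : ℝ => ∑ p ∈ Nat.primesLE ⌊x⌋₊, (p : ℝ)⁻¹) =O[atTop] fun x => log (log x) := by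
  refine IsBigO.of_bound 13 ?_
  filter_upwards [eventually_ge_atTop (exp (exp 1))] with x hx
  have hloglog := one_le_log_log hx
  have hx2 : 2 ≤ x := by linarith [add_one_le_exp 1, add_one_le_exp (exp 1)]
  have hN : 2 ≤ ⌊x⌋₊ := Nat.le_floor (by simpa using hx2)
  set J := Nat.log 2 ⌊x⌋₊
  have hJ : 1 ≤ J := Nat.le_log_of_pow_le one_lt_two hN
  have hx0 : 0 < x := by linarith
  have hlogx : 0 < log x := log_pos (by linarith)
  have hJx : (J : ℝ) * log 2 ≤ log x := by
    rw [← Real.log_pow]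
    refine log_le_log (by positivity) ?_
    have : 2 ^ J ≤ ⌊x⌋₊ := Nat.pow_log_le_self 2 (by omega)
    exact le_trans (by exact_mod_cast this) (Nat.floor_le hx0.le)
  have hlogJ : log J ≤ 1 + log (log x) := calc
    log J ≤ log (2 * log x) := by
      refine log_le_log (by exact_mod_cast hJ) ?_
      nlinarith [log_two_gt_d9]
    _ = log 2 + log (log x) := log_mul two_ne_zero hlogx.ne'
    _ ≤ 1 + log (log x) := by linarith [log_two_lt_d9]
  rw [norm_of_nonneg (by positivity), norm_of_nonneg (by linarith)]
  linarith [sum_inv_primesLE_le ⌊x⌋₊]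

lemma isBigO_one_log_log_pow (n : ℕ) :
    (fun _ : ℝ => (1 : ℝ)) =O[atTop] fun x => log (log x) ^ n := by
  refine IsBigO.of_bound 1 ?_
  filter_upwards [eventually_ge_atTop (exp (exp 1))] with x hx
  have hloglog := one_le_log_log hx
  rw [norm_one, one_mul, norm_pow, norm_of_nonneg (by linarith)]
  exact one_le_pow₀ hloglog

lemma sum_primesLE_pow_div_pow_le_one {r m : ℕ} (h : r + 2 ≤ m) (N : ℕ) :
    ∑ p ∈ Nat.primesLE N, (p : ℝ) ^ r / (p : ℝ) ^ m ≤ 1 := calc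
  _ ≤ ∑ p ∈ Nat.primesLE N, ((p : ℝ) ^ 2)⁻¹ :=
    sum_le_sum fun p hp =>
      pow_div_pow_le_inv_pow (by exact_mod_cast (Nat.prime_of_mem_primesLE hp).one_le) h
  _ ≤ ∑ i ∈ Ioo 1 (N + 1), ((i : ℝ) ^ 2)⁻¹ := by
    refine sum_le_sum_of_subset_of_nonneg (fun p hp => ?_) fun _ _ _ => by positivity
    have := Nat.mem_primesLE.1 hp
    exact mem_Ioo.2 ⟨this.2.one_lt, by omega⟩
  _ ≤ 1 := by
    have := sum_Ioo_inv_sq_le (α := ℝ) 1 (N + 1)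
    norm_num at this
    exact this

lemma isBigO_sum_primesLE_floor_pow_div_pow {r k : ℕ} (hk : r + 2 ≤ k) :
    (fun x : ℝ => ∑ p ∈ Nat.primesLE ⌊x⌋₊, (p : ℝ) ^ r / (p : ℝ) ^ (k - 1)) =O[atTop]
      fun x => log (log x) ^ (if r + 2 = k then 1 else 0) := by
  split_ifs with h
  · have hterm (N : ℕ) : ∑ p ∈ Nat.primesLE N, (p : ℝ) ^ r / (p : ℝ) ^ (k - 1) =
        ∑ p ∈ Nat.primesLE N, (p : ℝ)⁻¹ := sum_congr rfl fun p hp => by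
      have hp : (p : ℝ) ≠ 0 := by exact_mod_cast (Nat.prime_of_mem_primesLE hp).ne_zero
      rw [show k - 1 = r + 1 by omega, pow_succ, ← div_div, div_self (pow_ne_zero r hp), one_div]
    simpa only [hterm, pow_one] using isBigO_sum_inv_primesLE_floor
  · refine IsBigO.of_bound 1 (Eventually.of_forall fun x => ?_)
    have hsum := sum_primesLE_pow_div_pow_le_one (r := r) (m := k - 1) (by omega) ⌊x⌋₊
    rw [pow_zero, norm_one, one_mul, norm_of_nonneg (sum_nonneg fun _ _ => by positivity)]
    exact hsum

lemma sum_pow_mul_sub_natFloor_pow_le {s : Finset ℕ} (hs : ∀ p ∈ s, 0 < p) {x : ℝ} (hx : 0 ≤ x)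
    (r k : ℕ) :
    0 ≤ ∑ p ∈ s, (p : ℝ) ^ r * ((x / p) ^ k - (⌊x / p⌋₊ : ℝ) ^ k) ∧
      ∑ p ∈ s, (p : ℝ) ^ r * ((x / p) ^ k - (⌊x / p⌋₊ : ℝ) ^ k) ≤
        k * x ^ (k - 1) * ∑ p ∈ s, (p : ℝ) ^ r / (p : ℝ) ^ (k - 1) := by
  refine ⟨sum_nonneg fun p hp => ?_, ?_⟩
  · have hfloor : (⌊x / p⌋₊ : ℝ) ≤ x / p := Nat.floor_le (by positivity)
    have := pow_le_pow_left₀ (Nat.cast_nonneg _) hfloor k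
    exact mul_nonneg (by positivity) (sub_nonneg.2 this)
  rw [mul_sum]
  refine sum_le_sum fun p hp => ?_
  have hp : (0 : ℝ) < p := by exact_mod_cast hs p hp
  calc (p : ℝ) ^ r * ((x / p) ^ k - (⌊x / p⌋₊ : ℝ) ^ k) ≤ (p : ℝ) ^ r * (k * (x / p) ^ (k - 1)) :=
        mul_le_mul_of_nonneg_left (pow_sub_natFloor_pow_le (by positivity) k) (by positivity)
    _ = k * x ^ (k - 1) * ((p : ℝ) ^ r / (p : ℝ) ^ (k - 1)) := by rw [div_pow]; ring

lemma isBigO_sum_primesLE_pow_mul_sub_natFloor_pow (r k : ℕ) :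
    (fun x : ℝ => ∑ p ∈ Nat.primesLE ⌊x⌋₊, (p : ℝ) ^ r * ((x / p) ^ k - (⌊x / p⌋₊ : ℝ) ^ k))
      =O[atTop] fun x =>
        x ^ (k - 1) * ∑ p ∈ Nat.primesLE ⌊x⌋₊, (p : ℝ) ^ r / (p : ℝ) ^ (k - 1) := by
  refine IsBigO.of_bound k ?_
  filter_upwards [eventually_ge_atTop 0] with x hx
  obtain ⟨h0, hle⟩ := sum_pow_mul_sub_natFloor_pow_le
    (fun p hp => (Nat.prime_of_mem_primesLE hp).pos) hx r k
  rw [norm_of_nonneg h0, norm_of_nonneg (by positivity), ← mul_assoc]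
  exact hle

lemma tsum_sub_sum_range_le_of_le_inv_sq {f : ℕ → ℝ} (hf0 : ∀ n, 0 ≤ f n)
    (hf : ∀ n, f n ≤ ((n : ℝ) ^ 2)⁻¹) (N : ℕ) :
    0 ≤ ∑' n, f n - ∑ n ∈ range (N + 1), f n ∧
      ∑' n, f n - ∑ n ∈ range (N + 1), f n ≤ 2 / (N + 1) := by
  have hsum : Summable f :=
    Summable.of_nonneg_of_le hf0 hf (Real.summable_nat_pow_inv.2 one_lt_two)
  refine ⟨sub_nonneg.2 (hsum.sum_le_tsum _ fun n _ => hf0 n), ?_⟩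
  rw [← hsum.sum_add_tsum_nat_add (N + 1), add_sub_cancel_left]
  refine Real.tsum_le_of_sum_range_le (fun n => hf0 _) fun M => ?_
  calc ∑ i ∈ range M, f (i + (N + 1))
      ≤ ∑ i ∈ range M, (((i + (N + 1) : ℕ) : ℝ) ^ 2)⁻¹ := sum_le_sum fun i _ => hf _
    _ = ∑ i ∈ Ioo N (M + (N + 1)), ((i : ℝ) ^ 2)⁻¹ := by
        rw [range_eq_Ico, sum_Ico_add' (fun i : ℕ => ((i : ℝ) ^ 2)⁻¹), zero_add,
          Ico_add_one_left_eq_Ioo]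
    _ ≤ 2 / (N + 1) := by exact_mod_cast sum_Ioo_inv_sq_le N (M + (N + 1))

lemma tsum_primes_sub_sum_primesLE_le {f : ℕ → ℝ} (hf0 : ∀ p, p.Prime → 0 ≤ f p)
    (hf : ∀ p, p.Prime → f p ≤ ((p : ℝ) ^ 2)⁻¹) (N : ℕ) :
    0 ≤ ∑' p : Nat.Primes, f p - ∑ p ∈ Nat.primesLE N, f p ∧
      ∑' p : Nat.Primes, f p - ∑ p ∈ Nat.primesLE N, f p ≤ 2 / (N + 1) := by
  rw [Nat.Primes.tsum_eq_tsum_ite, Nat.primesLE_eq_filter_range, sum_filter]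
  refine tsum_sub_sum_range_le_of_le_inv_sq (fun n => ?_) (fun n => ?_) N
  · split_ifs with hn
    exacts [hf0 n hn, le_rfl]
  · split_ifs with hn
    exacts [hf n hn, by positivity]

lemma isBigO_pow_mul_tsum_primes_sub_sum_primesLE {r k : ℕ} (hk : r + 2 ≤ k) :
    (fun x : ℝ => x ^ k * (∑' p : Nat.Primes, ((p : ℕ) : ℝ) ^ r / ((p : ℕ) : ℝ) ^ k -
      ∑ p ∈ Nat.primesLE ⌊x⌋₊, (p : ℝ) ^ r / (p : ℝ) ^ k)) =O[atTop] fun x => x ^ (k - 1) := by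
  obtain ⟨j, rfl⟩ : ∃ j, k = j + 1 := ⟨k - 1, by omega⟩
  refine IsBigO.of_bound 2 ?_
  filter_upwards [eventually_gt_atTop 0] with x hx
  obtain ⟨h0, h2⟩ := tsum_primes_sub_sum_primesLE_le
    (f := fun p : ℕ => (p : ℝ) ^ r / (p : ℝ) ^ (j + 1)) (fun p _ => by positivity)
    (fun p hp => pow_div_pow_le_inv_pow (by exact_mod_cast hp.one_le) hk) ⌊x⌋₊
  rw [norm_mul, norm_of_nonneg h0, Nat.add_sub_cancel, norm_of_nonneg (by positivity),
    norm_of_nonneg (by positivity)]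
  calc x ^ (j + 1) * _ ≤ x ^ (j + 1) * (2 / (⌊x⌋₊ + 1)) := by gcongr
    _ ≤ x ^ (j + 1) * (2 / x) := by gcongr; exact (Nat.lt_floor_add_one x).le
    _ = 2 * x ^ j := by field_simp; ring

theorem stmt14 (r k : ℕ) (hk : r + 2 ≤ k) :
    (fun x : ℝ =>
      (∑ p ∈ Finset.filter Nat.Prime (Finset.Icc 1 ⌊x⌋₊),
        (p : ℝ) ^ r * (⌊x / (p : ℝ)⌋₊ : ℝ) ^ k) -
      x ^ k * ∑' p : Nat.Primes, ((p : ℕ) : ℝ) ^ r / ((p : ℕ) : ℝ) ^ k)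
      =O[atTop] (fun x : ℝ =>
        x ^ (k - 1) * Real.log (Real.log x) ^ (if r + 2 = k then 1 else 0)) := by
  have htail : (fun x : ℝ => x ^ k * (∑' p : Nat.Primes, ((p : ℕ) : ℝ) ^ r / ((p : ℕ) : ℝ) ^ k -
      ∑ p ∈ Nat.primesLE ⌊x⌋₊, (p : ℝ) ^ r / (p : ℝ) ^ k)) =O[atTop]
        fun x => x ^ (k - 1) * log (log x) ^ (if r + 2 = k then 1 else 0) := by
    refine (isBigO_pow_mul_tsum_primes_sub_sum_primesLE hk).trans ?_
    simpa only [mul_one] using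
      (isBigO_refl (fun x : ℝ => x ^ (k - 1)) _).mul (isBigO_one_log_log_pow _)
  have hfloor := (isBigO_sum_primesLE_pow_mul_sub_natFloor_pow r k).trans
    ((isBigO_refl (fun x : ℝ => x ^ (k - 1)) _).mul (isBigO_sum_primesLE_floor_pow_div_pow hk))
  refine (htail.neg_left.sub hfloor).congr_left fun x => ?_
  have hscale : x ^ k * ∑ p ∈ Nat.primesLE ⌊x⌋₊, (p : ℝ) ^ r / (p : ℝ) ^ k =
      ∑ p ∈ Nat.primesLE ⌊x⌋₊, (p : ℝ) ^ r * (x / p) ^ k := by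
    rw [mul_sum]
    exact sum_congr rfl fun p _ => by ring
  simp only [← Nat.primesLE_eq_filter_Icc_one, mul_sub, sum_sub_distrib]
  linear_combination hscale
end

section
/- Let m, ℓ be nonnegative integers with m − ℓ ≥ 2, and let k ≥ 1 be an integer with m − k − ℓ ≥ 1. Then the k-fold series ∑_{n₁=1}^∞ ⋯ ∑_{n_k=1}^∞ min(1/n₁^m, …, 1/n_k^m) · max(n₁^ℓ, …, n_k^ℓ) converges and equals ∑_{j=0}^{k−1} (−1)^{k−1−j} binom(k,j) ζ(m−ℓ−j), where ζ is the Riemann zeta function. -/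
open Filter Finset

/-- The Riemann zeta function at a real argument (real-valued). -/
noncomputable def zetaR (x : ℝ) : ℝ := (riemannZeta (x : ℂ)).re

/-! Writing `M` for the largest of the shifted indices `nᵢ + 1`, the summand is `1 / M ^ (m - ℓ)`,
and exactly `M ^ k - (M - 1) ^ k` tuples share a given `M`. Grouping by `M` turns the series into
`∑ (M ^ k - (M - 1) ^ k) / M ^ (m - ℓ)`, and expanding `M ^ k - (M - 1) ^ k` binomially in powers
of `M` splits it into the zeta values `ζ (m - ℓ - j)`, `j < k`. -/

theorem hasSum_one_div_nat_add_one_pow_zetaR {p : ℕ} (hp : 1 < p) :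
    HasSum (fun n : ℕ => 1 / ((n : ℝ) + 1) ^ p) (zetaR p) := by
  obtain ⟨S, hS⟩ : Summable (fun n : ℕ => 1 / ((n : ℝ) + 1) ^ p) := by
    exact_mod_cast (summable_nat_add_iff 1).2 (Real.summable_one_div_nat_pow.2 hp)
  have hzeta : riemannZeta p = S := by
    rw [zeta_eq_tsum_one_div_nat_add_one_cpow (by simpa using hp)]
    have hSC := Complex.hasSum_ofReal.2 hS
    push_cast at hSC
    simpa only [Complex.cpow_natCast] using hSC.tsum_eq
  simpa [zetaR, hzeta] using hS

theorem pow_sub_sub_one_pow {R : Type*} [CommRing R] (x : R) (k : ℕ) :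
    x ^ k - (x - 1) ^ k = ∑ j ∈ range k, (-1) ^ (k - 1 - j) * (k.choose j : R) * x ^ j := by
  rw [sub_eq_add_neg x, add_pow, sum_range_succ, Nat.sub_self, pow_zero, Nat.choose_self,
    Nat.cast_one, mul_one, mul_one, sub_add_cancel_right, ← sum_neg_distrib]
  refine sum_congr rfl fun j hj => ?_
  rw [show k - j = k - 1 - j + 1 by have := mem_range.1 hj; omega, pow_succ]
  ring

theorem hasSum_succ_pow_sub_pow_div_succ_pow {k s : ℕ} (hks : k < s) :
    HasSum (fun N : ℕ => (((N : ℝ) + 1) ^ k - (N : ℝ) ^ k) / ((N : ℝ) + 1) ^ s)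
      (∑ j ∈ range k, (-1) ^ (k - 1 - j) * (k.choose j : ℝ) * zetaR (s - j : ℕ)) := by
  have hterm (N : ℕ) : (((N : ℝ) + 1) ^ k - (N : ℝ) ^ k) / ((N : ℝ) + 1) ^ s =
      ∑ j ∈ range k, (-1) ^ (k - 1 - j) * (k.choose j : ℝ) * (1 / ((N : ℝ) + 1) ^ (s - j)) := by
    have hbinom := pow_sub_sub_one_pow ((N : ℝ) + 1) k
    rw [add_sub_cancel_right] at hbinom
    rw [hbinom, sum_div]
    refine sum_congr rfl fun j hj => ?_
    obtain ⟨t, rfl⟩ := Nat.exists_eq_add_of_le (by have := mem_range.1 hj; omega : j ≤ s)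
    rw [Nat.add_sub_cancel_left, pow_add]
    field_simp
  simp_rw [hterm]
  exact hasSum_sum fun j hj => (hasSum_one_div_nat_add_one_pow_zetaR
    (by have := mem_range.1 hj; omega)).mul_left _

theorem hasSum_comp_of_hasSum_card_mul {β γ : Type*} {g : β → γ} {f : γ → ℝ} (hf : 0 ≤ f)
    (S : γ → Finset β) (hS : ∀ b c, b ∈ S c ↔ g b = c) {T : ℝ}
    (h : HasSum (fun c => #(S c) * f c) T) : HasSum (f ∘ g) T := by
  let e : (Σ c, S c) ≃ β :=
    (Equiv.sigmaCongrRight fun c => Equiv.subtypeEquivRight fun b => hS b c).trans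
      (Equiv.sigmaFiberEquiv g)
  have hfiber (c : γ) : HasSum (fun b : S c => f (g b)) (#(S c) * f c) := by
    have hconst (b : S c) : f (g b) = f c := by rw [(hS b c).1 b.2]
    simpa [hconst] using hasSum_fintype fun b : S c => f (g b)
  rw [← e.hasSum_iff]
  refine h.sigma_of_hasSum hfiber ((summable_sigma_of_nonneg fun _ => hf _).2
    ⟨fun c => (hfiber c).summable, ?_⟩)
  exact h.summable.congr fun c => (hfiber c).tsum_eq.symm

theorem Fintype.mem_piFinset_range_succ_sdiff_iff {ι : Type*} [Fintype ι] [DecidableEq ι]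
    [Nonempty ι] (n : ι → ℕ) (N : ℕ) :
    n ∈ Fintype.piFinset (fun _ => range (N + 1)) \ Fintype.piFinset (fun _ => range N) ↔
      univ.sup' univ_nonempty n = N := by
  obtain ⟨i, -, hi⟩ := exists_mem_eq_sup' univ_nonempty n
  simp only [Finset.mem_sdiff, Fintype.mem_piFinset, Finset.mem_range, Nat.lt_succ_iff,
    not_forall, not_lt]
  constructor
  · rintro ⟨hle, j, hj⟩
    exact le_antisymm (hi ▸ hle i) (hj.trans (le_sup' n (mem_univ j)))
  · rintro rfl
    exact ⟨fun j => le_sup' n (mem_univ j), i, hi.le⟩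

theorem Fintype.card_piFinset_range_succ_sdiff {ι : Type*} [Fintype ι] [DecidableEq ι] (N : ℕ) :
    #(piFinset (fun _ : ι => range (N + 1)) \ piFinset (fun _ => range N)) =
      (N + 1) ^ Fintype.card ι - N ^ Fintype.card ι := by
  rw [Finset.card_sdiff_of_subset (piFinset_subset _ _ fun _ => range_subset_range.2 N.le_succ)]
  simp

theorem hasSum_comp_sup' {ι : Type*} [Fintype ι] [Nonempty ι] {f : ℕ → ℝ} (hf : 0 ≤ f) {T : ℝ}
    (h : HasSum (fun N : ℕ => (((N : ℝ) + 1) ^ Fintype.card ι - (N : ℝ) ^ Fintype.card ι) * f N)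
      T) :
    HasSum (fun n : ι → ℕ => f (univ.sup' univ_nonempty n)) T := by
  classical
  refine hasSum_comp_of_hasSum_card_mul hf _ Fintype.mem_piFinset_range_succ_sdiff_iff ?_
  convert h using 3 with N
  rw [Fintype.card_piFinset_range_succ_sdiff, Nat.cast_sub (by gcongr; omega)]
  push_cast
  rfl

theorem Monotone.map_finset_sup' {α β ι : Type*} [LinearOrder α] [LinearOrder β] {g : α → β}
    (hg : Monotone g) {s : Finset ι} (H : s.Nonempty) (f : ι → α) :
    g (s.sup' H f) = s.sup' H (g ∘ f) :=
  apply_sup'_eq_sup'_comp H g fun _ _ => hg.map_max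

theorem Antitone.map_finset_sup' {α β ι : Type*} [LinearOrder α] [LinearOrder β] {g : α → β}
    (hg : Antitone g) {s : Finset ι} (H : s.Nonempty) (f : ι → α) :
    g (s.sup' H f) = s.inf' H (g ∘ f) :=
  apply_sup'_eq_sup'_comp (γ := βᵒᵈ) H (OrderDual.toDual ∘ g) fun _ _ => hg.map_max

theorem inf'_one_div_pow_mul_sup'_pow {ι : Type*} {s : Finset ι} (H : s.Nonempty) (n : ι → ℕ)
    {m ℓ : ℕ} (hℓm : ℓ ≤ m) :
    s.inf' H (fun i => 1 / ((n i : ℝ) + 1) ^ m) * s.sup' H (fun i => ((n i : ℝ) + 1) ^ ℓ) =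
      1 / (((s.sup' H n : ℕ) : ℝ) + 1) ^ (m - ℓ) := by
  have hanti : Antitone fun N : ℕ => 1 / ((N : ℝ) + 1) ^ m := fun a b hab => by
    dsimp only
    gcongr
  have hmono : Monotone fun N : ℕ => ((N : ℝ) + 1) ^ ℓ := fun a b hab => by
    dsimp only
    gcongr
  have hinf : s.inf' H (fun i => 1 / ((n i : ℝ) + 1) ^ m) = 1 / (((s.sup' H n : ℕ) : ℝ) + 1) ^ m :=
    (hanti.map_finset_sup' H n).symm
  have hsup : s.sup' H (fun i => ((n i : ℝ) + 1) ^ ℓ) = (((s.sup' H n : ℕ) : ℝ) + 1) ^ ℓ :=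
    (hmono.map_finset_sup' H n).symm
  rw [hinf, hsup, pow_sub₀ _ (by positivity) hℓm]
  field_simp

theorem stmt19_general (m ℓ : ℕ) (k : ℕ) (hk : 1 ≤ k) (hmkl : k + ℓ + 1 ≤ m) :
    HasSum
      (fun n : Fin k → ℕ =>
        (Finset.univ.inf' (Finset.univ_nonempty_iff.mpr ⟨⟨0, hk⟩⟩)
          (fun i => 1 / ((n i : ℝ) + 1) ^ m)) *
        (Finset.univ.sup' (Finset.univ_nonempty_iff.mpr ⟨⟨0, hk⟩⟩)
          (fun i => ((n i : ℝ) + 1) ^ ℓ)))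
      (∑ j ∈ Finset.range k, (-1 : ℝ) ^ (k - 1 - j) * (k.choose j : ℝ) *
        zetaR ((m : ℝ) - (ℓ : ℝ) - (j : ℝ))) := by
  have : Nonempty (Fin k) := ⟨⟨0, hk⟩⟩
  have hzeta : ∑ j ∈ range k, (-1 : ℝ) ^ (k - 1 - j) * (k.choose j : ℝ) * zetaR (m - ℓ - j : ℕ) =
      ∑ j ∈ range k, (-1 : ℝ) ^ (k - 1 - j) * (k.choose j : ℝ) * zetaR (m - ℓ - j) := by
    refine sum_congr rfl fun j hj => ?_
    rw [Nat.cast_sub (by have := mem_range.1 hj; omega), Nat.cast_sub (by omega)]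
  simp_rw [inf'_one_div_pow_mul_sup'_pow _ _ (by omega : ℓ ≤ m), ← hzeta]
  refine hasSum_comp_sup' (f := fun N : ℕ => 1 / ((N : ℝ) + 1) ^ (m - ℓ))
    (fun N => by positivity) ?_
  simpa only [Fintype.card_fin, mul_one_div] using
    hasSum_succ_pow_sub_pow_div_succ_pow (by omega : k < m - ℓ)

theorem stmt19 (m ℓ : ℕ) (hml : ℓ + 2 ≤ m) (k : ℕ) (hk : 1 ≤ k) (hmkl : k + ℓ + 1 ≤ m) :
    HasSum
      (fun n : Fin k → ℕ =>
        (Finset.univ.inf' (Finset.univ_nonempty_iff.mpr ⟨⟨0, hk⟩⟩)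
          (fun i => 1 / ((n i : ℝ) + 1) ^ m)) *
        (Finset.univ.sup' (Finset.univ_nonempty_iff.mpr ⟨⟨0, hk⟩⟩)
          (fun i => ((n i : ℝ) + 1) ^ ℓ)))
      (∑ j ∈ Finset.range k, (-1 : ℝ) ^ (k - 1 - j) * (k.choose j : ℝ) *
        zetaR ((m : ℝ) - (ℓ : ℝ) - (j : ℝ))) :=
  stmt19_general m ℓ k hk hmkl
end
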